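/- Let (S,·) be a commutative semigroup, let e be an ultrafilter on S belonging to the smallest two-sided ideal K(βS) of βS, let A ∈ e, let l ∈ ℕ, and for each j ∈ {0,…,l-1} let ⟨y_{j,n}⟩_{n=0}^∞ be a sequence in S. Then there exist a ∈ S and α ∈ P_f(ω) such that a · ∏_{t∈α} y_{j,t} ∈ A for every j ∈ {0,…,l-1}. -/

import Mathlib

/- The semigroup structure on `βS = Ultrafilter S`, with
`A ∈ p * q ↔ {s | {t | s * t ∈ A} ∈ q} ∈ p`. -/
attribute [local instance] Ultrafilter.mul Ultrafilter.semigroup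

/-- The ordered product of a `Monoid`-valued function over a finite set of
natural-number indices, the factors being taken in increasing order of the indices. -/
def oListProd {M : Type*} [Monoid M] (f : ℕ → M) (α : Finset ℕ) : M :=
  ((α.sort (· ≤ ·)).map f).prod

/-- The ordered product `∏_{t ∈ α} f t` for a semigroup-valued `f`, computed in the
monoid `WithOne S`.  For nonempty `α` this is the genuine product (in increasing order
of indices) of the `f t ∈ S`, viewed in `WithOne S`. -/
def oProd {S : Type*} [Semigroup S] (f : ℕ → S) (α : Finset ℕ) : WithOne S :=
  oListProd (fun t => (f t : WithOne S)) α

/-- A left ideal of `βS`: a nonempty `L ⊆ βS` with `βS · L ⊆ L`. -/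
def IsLeftIdeal {S : Type*} [Semigroup S] (L : Set (Ultrafilter S)) : Prop :=
  L.Nonempty ∧ ∀ p : Ultrafilter S, ∀ q ∈ L, p * q ∈ L

/-- A minimal left ideal of `βS`. -/
def IsMinimalLeftIdeal {S : Type*} [Semigroup S] (L : Set (Ultrafilter S)) : Prop :=
  IsLeftIdeal L ∧ ∀ L' : Set (Ultrafilter S), IsLeftIdeal L' → L' ⊆ L → L' = L

/-!
Work in the compact right topological semigroup `(βS)^l`. The tuples lying, for every `n`, in
the closure of `{(a * ∏_{t∈α} y j t)_j : min α > n}` form a closed subsemigroup `I` (glue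
`α` and `β` with `max α < min β`), and `I` meets `L^l` for the minimal left ideal `L ∋ e`, at
`(u-lim_n y j n * e)_j` for a nonprincipal ultrafilter `u` on `ℕ`. An idempotent `g` of the
compact semigroup `I ∩ L^l` satisfies `e * g j = e`, since `L = βS * g j`; and as `S` is
commutative, `(e, …, e) * g ∈ I`. So `(e, …, e) ∈ I`, which at `(A, …, A)` is the theorem.
-/

open Filter

theorem Finset.sort_union_of_forall_lt {ι : Type*} [LinearOrder ι] {α β : Finset ι}
    (h : ∀ i ∈ α, ∀ k ∈ β, i < k) :
    (α ∪ β).sort (· ≤ ·) = α.sort (· ≤ ·) ++ β.sort (· ≤ ·) := by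
  have hsorted : (α.sort (· ≤ ·) ++ β.sort (· ≤ ·)).Pairwise (· ≤ ·) :=
    List.pairwise_append.2 ⟨α.pairwise_sort _, β.pairwise_sort _, fun i hi k hk =>
      (h i ((α.mem_sort _).1 hi) k ((β.mem_sort _).1 hk)).le⟩
  have hnodup : (α.sort (· ≤ ·) ++ β.sort (· ≤ ·)).Nodup :=
    List.nodup_append.2 ⟨α.sort_nodup _, β.sort_nodup _, fun i hi k hk hik =>
      (h i ((α.mem_sort _).1 hi) k ((β.mem_sort _).1 hk)).ne hik⟩
  simpa using (List.toFinset_sort (· ≤ ·) hnodup).2 hsorted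

theorem oListProd_union {M : Type*} [Monoid M] (f : ℕ → M) {α β : Finset ℕ}
    (h : ∀ i ∈ α, ∀ k ∈ β, i < k) :
    oListProd f (α ∪ β) = oListProd f α * oListProd f β := by
  rw [oListProd, Finset.sort_union_of_forall_lt h, List.map_append, List.prod_append]
  rfl

theorem oProd_union {S : Type*} [Semigroup S] (f : ℕ → S) {α β : Finset ℕ}
    (h : ∀ i ∈ α, ∀ k ∈ β, i < k) : oProd f (α ∪ β) = oProd f α * oProd f β :=
  oListProd_union _ h

theorem oProd_singleton {S : Type*} [Semigroup S] (f : ℕ → S) (n : ℕ) :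
    oProd f {n} = f n := by
  simp [oProd, oListProd]

section MinimalLeftIdeal

variable {S : Type*} [Semigroup S] {L : Set (Ultrafilter S)}

theorem isLeftIdeal_range_mul_right (q : Ultrafilter S) :
    IsLeftIdeal (Set.range (· * q)) := by
  refine ⟨⟨q * q, q, rfl⟩, ?_⟩
  rintro p _ ⟨r, rfl⟩
  exact ⟨p * r, mul_assoc p r q⟩

namespace IsMinimalLeftIdeal

theorem eq_range_mul_right (hL : IsMinimalLeftIdeal L) {q : Ultrafilter S} (hq : q ∈ L) :
    L = Set.range (· * q) := by
  refine (hL.2 _ (isLeftIdeal_range_mul_right q) ?_).symm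
  rintro _ ⟨p, rfl⟩
  exact hL.1.2 p q hq

theorem isClosed (hL : IsMinimalLeftIdeal L) : IsClosed L := by
  obtain ⟨q, hq⟩ := hL.1.1
  rw [hL.eq_range_mul_right hq]
  exact (isCompact_range (Ultrafilter.continuous_mul_left q)).isClosed

theorem mul_eq_of_isIdempotentElem (hL : IsMinimalLeftIdeal L) {e g : Ultrafilter S}
    (he : e ∈ L) (hg : g ∈ L) (hgg : IsIdempotentElem g) : e * g = e := by
  have he' : e ∈ Set.range (· * g) := hL.eq_range_mul_right hg ▸ he
  obtain ⟨p, rfl⟩ := he'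
  simp only [mul_assoc, hgg.eq]

end IsMinimalLeftIdeal

end MinimalLeftIdeal

theorem Ultrafilter.continuous_mul_left_pi {ι M : Type*} [Mul M] (v : ι → Ultrafilter M) :
    Continuous (· * v) :=
  continuous_pi fun j => (Ultrafilter.continuous_mul_left (v j)).comp (continuous_apply j)

section ClusterTuples

variable {S : Type*} [CommSemigroup S] {l : ℕ} {y : Fin l → ℕ → S}

/-- The tuples in `(βS)^l` lying, for every `n`, in the closure of
`{(a * ∏_{t∈α} y j t)_j : a ∈ S, min α > n}`. -/
def clusterTuples (y : Fin l → ℕ → S) : Set (Fin l → Ultrafilter S) :=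
  {x | ∀ (n : ℕ) (A : Fin l → Set S), (∀ j, A j ∈ x j) →
    ∃ (a : S) (α : Finset ℕ), α.Nonempty ∧ (∀ k ∈ α, n < k) ∧
      ∀ j, ∃ p ∈ A j, (p : WithOne S) = a * oProd (y j) α}

theorem isClosed_clusterTuples : IsClosed (clusterTuples y) := by
  simp only [clusterTuples, Set.ofPred_forall]
  refine isClosed_iInter fun n => isClosed_iInter fun A => isClosed_imp ?_ isClosed_const
  simpa [Set.pi] using isOpen_set_pi Set.finite_univ fun j _ => ultrafilter_isOpen_basic (A j)

theorem const_mul_mem_clusterTuples (e : Ultrafilter S) {v : Fin l → Ultrafilter S}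
    (hv : v ∈ clusterTuples y) : (fun _ => e) * v ∈ clusterTuples y := by
  intro n A hA
  obtain ⟨s, hs⟩ := (eventually_all.2 hA).exists
  obtain ⟨a, α, hα, hn, hp⟩ := hv n (fun j => {t | s * t ∈ A j}) hs
  refine ⟨s * a, α, hα, hn, fun j => ?_⟩
  obtain ⟨p, hpA, hpa⟩ := hp j
  exact ⟨s * p, hpA, by rw [WithOne.coe_mul, hpa, WithOne.coe_mul, mul_assoc]⟩

theorem mul_mem_clusterTuples {v w : Fin l → Ultrafilter S}
    (hv : v ∈ clusterTuples y) (hw : w ∈ clusterTuples y) : v * w ∈ clusterTuples y := by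
  intro n A hA
  obtain ⟨a, α, hα, hαn, hp⟩ := hv n (fun j => {s | {t | s * t ∈ A j} ∈ w j}) hA
  choose p hpA hpa using hp
  obtain ⟨b, β, hβ, hβα, hq⟩ := hw (α.sup id) (fun j => {t | p j * t ∈ A j}) hpA
  have hαβ : ∀ i ∈ α, ∀ k ∈ β, i < k := fun i hi k hk =>
    (Finset.le_sup (f := id) hi).trans_lt (hβα k hk)
  refine ⟨a * b, α ∪ β, hα.mono Finset.subset_union_left, ?_, fun j => ?_⟩
  · obtain ⟨i, hi⟩ := hα
    exact Finset.forall_mem_union.2 ⟨hαn, fun k hk => (hαn i hi).trans (hαβ i hi k hk)⟩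
  · obtain ⟨q, hqA, hqb⟩ := hq j
    refine ⟨p j * q, hqA, ?_⟩
    rw [WithOne.coe_mul, hpa, hqb, oProd_union _ hαβ, WithOne.coe_mul]
    exact mul_mul_mul_comm _ _ _ _

theorem map_mul_mem_clusterTuples {u : Ultrafilter ℕ} (hu : (u : Filter ℕ) ≤ atTop)
    (e : Ultrafilter S) : (fun j => u.map (y j) * e) ∈ clusterTuples y := by
  intro n A hA
  obtain ⟨k, hkn, hk⟩ :=
    (((eventually_gt_atTop n).filter_mono hu).and (eventually_all.2 hA)).exists
  obtain ⟨c, hc⟩ := (eventually_all.2 hk).exists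
  refine ⟨c, {k}, Finset.singleton_nonempty k, by simpa using hkn, fun j => ?_⟩
  exact ⟨y j k * c, hc j, by rw [oProd_singleton, WithOne.coe_mul, mul_comm]⟩

end ClusterTuples

/-- Let `S` be a commutative semigroup, let `e ∈ K(βS)` (i.e. `e` belongs to some
minimal left ideal of `βS`), let `A ∈ e`, let `l ∈ ℕ`, and for each `j ∈ {0,…,l-1}`
let `⟨y j n⟩ₙ` be a sequence in `S`.  Then there are `a ∈ S` and `α ∈ P_f(ω)` such
that `a * ∏_{t∈α} y j t ∈ A` for every `j`. -/
theorem central_sets_special_case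
    {S : Type*} [CommSemigroup S] (e : Ultrafilter S)
    (hK : ∃ L : Set (Ultrafilter S), IsMinimalLeftIdeal L ∧ e ∈ L)
    (A : Set S) (hA : A ∈ e) (l : ℕ) (y : Fin l → ℕ → S) :
    ∃ (a : S) (α : Finset ℕ), α.Nonempty ∧
      ∀ j : Fin l, ∃ p ∈ A, (p : WithOne S) = (a : WithOne S) * oProd (y j) α := by
  obtain ⟨L, hL, heL⟩ := hK
  let M := clusterTuples y ∩ Set.univ.pi fun _ => L
  have hM_compact : IsCompact M :=
    (isClosed_clusterTuples.inter (isClosed_set_pi fun _ _ => hL.isClosed)).isCompact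
  have hM_ne : M.Nonempty :=
    ⟨_, map_mul_mem_clusterTuples (Ultrafilter.of_le atTop) e, fun j _ => hL.1.2 _ e heL⟩
  have hM_mul : ∀ v ∈ M, ∀ w ∈ M, v * w ∈ M := fun v hv w hw =>
    ⟨mul_mem_clusterTuples hv.1 hw.1, fun j _ => hL.1.2 _ _ (hw.2 j trivial)⟩
  obtain ⟨g, ⟨hg, hgL⟩, hgg⟩ := exists_idempotent_in_compact_subsemigroup
    Ultrafilter.continuous_mul_left_pi M hM_ne hM_compact hM_mul
  have he : (fun _ => e) * g = fun _ => e :=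
    funext fun j => hL.mul_eq_of_isIdempotentElem heL (hgL j trivial) (congrFun hgg j)
  obtain ⟨a, α, hα, -, h⟩ :=
    (he ▸ const_mul_mem_clusterTuples e hg) 0 (fun _ => A) fun _ => hA
  exact ⟨a, α, hα, h⟩
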